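/- Theorem 1(a): For each T ∈ ℕ, let n(T) ≥ K₀ be an integer (K₀ ≥ 1 fixed), let {G₁^{(T)},…,G_{K₀}^{(T)}} be a partition of {1,…,n(T)} into K₀ nonempty groups, and let d̂^{(T)} be a random symmetric real array on {1,…,n(T)}² defined on a probability space with probability measure P_T. Assume that P_T( {G₁^{(T)},…,G_{K₀}^{(T)}} is d̂^{(T)}-separated ) → 1 as T → ∞. Then P_T( P^{n(T)−K₀}(d̂^{(T)}) = {G₁^{(T)},…,G_{K₀}^{(T)}} ) → 1 as T → ∞, where P^{n−K₀}(d) denotes the complete-linkage HAC partition into K₀ clusters computed from d. -/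

import Mathlib

open Finset

/-- Complete-linkage dissimilarity `Δ(S,S') = max_{i ∈ S, j ∈ S'} d i j`, as an
extended real (so that the value over an empty index set is `⊥`). -/
noncomputable def cLink {n : ℕ} (d : Fin n → Fin n → ℝ) (S S' : Finset (Fin n)) : EReal :=
  sSup {x : EReal | ∃ i ∈ S, ∃ j ∈ S', x = (d i j : EReal)}

/-- Within-cluster dissimilarity `Δ(C) = max_{i,j ∈ C, i ≠ j} d i j`, as an extended real;
for a singleton (or empty) cluster the value is `⊥`, which is smaller than every real. -/
noncomputable def cDiam {n : ℕ} (d : Fin n → Fin n → ℝ) (C : Finset (Fin n)) : EReal :=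
  sSup {x : EReal | ∃ i ∈ C, ∃ j ∈ C, i ≠ j ∧ x = (d i j : EReal)}

/-- The initial partition of `{1,…,n}` into `n` singleton clusters. -/
def singletonPartition (n : ℕ) : Finset (Finset (Fin n)) :=
  Finset.univ.image fun i : Fin n => ({i} : Finset (Fin n))

/-- `Q` is obtained from `P` by merging one pair of distinct clusters attaining the
minimum of the complete-linkage dissimilarity `Δ` over all pairs of distinct clusters. -/
def IsMergeStep {n : ℕ} (d : Fin n → Fin n → ℝ) (P Q : Finset (Finset (Fin n))) : Prop :=
  ∃ C ∈ P, ∃ C' ∈ P, C ≠ C' ∧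
    (∀ D ∈ P, ∀ D' ∈ P, D ≠ D' → cLink d C C' ≤ cLink d D D') ∧
    Q = insert (C ∪ C') ((P.erase C).erase C')

/-- A run of the complete-linkage HAC algorithm (with an arbitrary choice of
tie-breaking at each step): `P 0` is the singleton partition and for every
`r < n - 1`, `P (r+1)` is obtained from `P r` by a merge step. -/
def IsHACChain {n : ℕ} (d : Fin n → Fin n → ℝ) (P : ℕ → Finset (Finset (Fin n))) : Prop :=
  P 0 = singletonPartition n ∧ ∀ r, r < n - 1 → IsMergeStep d (P r) (P (r + 1))

/-- `G` is a partition of `{1,…,n}` into `K₀` nonempty groups. -/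
def IsGroupPartition {n K₀ : ℕ} (G : Fin K₀ → Finset (Fin n)) : Prop :=
  (∀ k, (G k).Nonempty) ∧ (∀ i : Fin n, ∃ k, i ∈ G k) ∧
    ∀ k k' : Fin K₀, k ≠ k' → Disjoint (G k) (G k')

/-- The partition `G` is `d`-separated: every within-group distance is strictly smaller
than every between-group distance (vacuously true when `K₀ = 1`). -/
def IsSeparated {n K₀ : ℕ} (d : Fin n → Fin n → ℝ) (G : Fin K₀ → Finset (Fin n)) : Prop :=
  ∀ k : Fin K₀, ∀ i ∈ G k, ∀ j ∈ G k, i ≠ j →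
    ∀ k₁ k₂ : Fin K₀, k₁ ≠ k₂ → ∀ a ∈ G k₁, ∀ b ∈ G k₂, d i j < d a b

/-- `A` is a refinement of `B`: every element of `A` is a subset of some element of `B`. -/
def IsRefinement {n : ℕ} (A B : Finset (Finset (Fin n))) : Prop :=
  ∀ C ∈ A, ∃ D ∈ B, C ⊆ D

/-! Under separation, complete-linkage HAC never merges two clusters from different groups
while there are more clusters than groups: by pigeonhole two current clusters lie in a common
group, and their linkage is a within-group distance, strictly below every between-group
distance. After `n - K₀` merges the clusters therefore form a partition into `K₀` blocks
refining the `K₀` groups, which can only be the groups themselves. Hence the separation event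
is contained in the recovery event. -/

section FinsetPartition

variable {α : Type*}

structure IsFinsetPartition (P : Finset (Finset α)) : Prop where
  nonempty : ∀ C ∈ P, C.Nonempty
  exists_mem : ∀ a, ∃ C ∈ P, a ∈ C
  pairwiseDisjoint : (P : Set (Finset α)).PairwiseDisjoint id

namespace IsFinsetPartition

variable {P : Finset (Finset α)} {C C' : Finset α}

lemma eq_of_mem_of_mem (hP : IsFinsetPartition P) (hC : C ∈ P) (hC' : C' ∈ P) {a : α}
    (ha : a ∈ C) (ha' : a ∈ C') : C = C' :=
  hP.pairwiseDisjoint.elim_finset hC hC' a ha ha'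

variable [DecidableEq α]

lemma merge (hP : IsFinsetPartition P) (hC : C ∈ P) (hC' : C' ∈ P) :
    IsFinsetPartition (insert (C ∪ C') ((P.erase C).erase C')) := by
  have hrest : (((P.erase C).erase C' : Finset (Finset α)) : Set (Finset α)) ⊆ P := by
    intro E hE
    exact mem_of_mem_erase (mem_of_mem_erase hE)
  refine ⟨?_, fun a => ?_, ?_⟩
  · simp only [mem_insert, mem_erase]
    rintro E (rfl | ⟨-, -, hE⟩)
    · exact (hP.nonempty C hC).mono subset_union_left
    · exact hP.nonempty E hE
  · obtain ⟨E, hE, haE⟩ := hP.exists_mem a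
    by_cases hEC : E = C ∨ E = C'
    · refine ⟨C ∪ C', mem_insert_self _ _, ?_⟩
      rcases hEC with rfl | rfl
      exacts [mem_union_left _ haE, mem_union_right _ haE]
    · push Not at hEC
      exact ⟨E, mem_insert_of_mem (mem_erase.2 ⟨hEC.2, mem_erase.2 ⟨hEC.1, hE⟩⟩), haE⟩
  · rw [coe_insert, Set.pairwiseDisjoint_insert]
    refine ⟨hP.pairwiseDisjoint.subset hrest, fun E hE _ => ?_⟩
    simp only [coe_erase, Set.mem_sdiff, Set.mem_singleton_iff, mem_coe] at hE
    exact disjoint_union_left.2 ⟨hP.pairwiseDisjoint hC hE.1.1 (Ne.symm hE.1.2),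
      hP.pairwiseDisjoint hC' hE.1.1 (Ne.symm hE.2)⟩

lemma card_merge (hP : IsFinsetPartition P) (hC : C ∈ P) (hC' : C' ∈ P) (hCC' : C ≠ C') :
    #(insert (C ∪ C') ((P.erase C).erase C')) = #P - 1 := by
  have hnotMem : C ∪ C' ∉ (P.erase C).erase C' := by
    intro hmem
    obtain ⟨hne, hmem⟩ := mem_erase.1 (mem_erase.1 hmem).2
    obtain ⟨a, ha⟩ := hP.nonempty C hC
    exact hne (hP.eq_of_mem_of_mem hmem hC (mem_union_left _ ha) ha)
  have hC'' : C' ∈ P.erase C := mem_erase.2 ⟨Ne.symm hCC', hC'⟩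
  have : 1 < #P := one_lt_card.2 ⟨C, hC, C', hC', hCC'⟩
  rw [card_insert_of_notMem hnotMem, card_erase_of_mem hC'', card_erase_of_mem hC]
  omega

end IsFinsetPartition

end FinsetPartition

section HAC

variable {n K₀ : ℕ}

lemma isFinsetPartition_singletonPartition : IsFinsetPartition (singletonPartition n) where
  nonempty := by
    simp only [singletonPartition, mem_image, mem_univ, true_and]
    rintro _ ⟨i, rfl⟩
    exact singleton_nonempty i
  exists_mem i := ⟨{i}, mem_image_of_mem _ (mem_univ i), mem_singleton_self i⟩
  pairwiseDisjoint := by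
    simp only [singletonPartition, coe_image, coe_univ, Set.image_univ]
    rintro _ ⟨i, rfl⟩ _ ⟨j, rfl⟩ hij
    exact disjoint_singleton.2 fun h => hij (congrArg _ h)

lemma card_singletonPartition : #(singletonPartition n) = n := by
  rw [singletonPartition, card_image_of_injective _ singleton_injective, card_univ,
    Fintype.card_fin]

lemma isRefinement_singletonPartition {B : Finset (Finset (Fin n))} (hB : IsFinsetPartition B) :
    IsRefinement (singletonPartition n) B := by
  simp only [IsRefinement, singletonPartition, mem_image, mem_univ, true_and]
  rintro _ ⟨i, rfl⟩
  obtain ⟨D, hD, hiD⟩ := hB.exists_mem i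
  exact ⟨D, hD, singleton_subset_iff.2 hiD⟩

namespace IsGroupPartition

variable {G : Fin K₀ → Finset (Fin n)}

lemma injective (hG : IsGroupPartition G) : Function.Injective G := by
  intro k k' hkk'
  by_contra hne
  have := hG.2.2 k k' hne
  rw [hkk', disjoint_self_iff_empty] at this
  exact (hG.1 k').ne_empty this

lemma card_image (hG : IsGroupPartition G) : #(univ.image G) = K₀ := by
  rw [card_image_of_injective _ hG.injective, card_univ, Fintype.card_fin]

lemma isFinsetPartition (hG : IsGroupPartition G) : IsFinsetPartition (univ.image G) where
  nonempty := by
    simp only [mem_image, mem_univ, true_and]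
    rintro _ ⟨k, rfl⟩
    exact hG.1 k
  exists_mem i := by
    obtain ⟨k, hk⟩ := hG.2.1 i
    exact ⟨G k, mem_image_of_mem _ (mem_univ k), hk⟩
  pairwiseDisjoint := by
    simp only [coe_image, coe_univ, Set.image_univ]
    rintro _ ⟨k, rfl⟩ _ ⟨k', rfl⟩ hne
    exact hG.2.2 k k' fun h => hne (congrArg G h)

end IsGroupPartition

namespace IsRefinement

variable {A B : Finset (Finset (Fin n))}

lemma exists_ne_subset_of_card_lt (h : IsRefinement A B) (hcard : #B < #A) :
    ∃ C ∈ A, ∃ C' ∈ A, C ≠ C' ∧ ∃ D ∈ B, C ⊆ D ∧ C' ⊆ D := by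
  choose f hfB hf using h
  obtain ⟨⟨C, hC⟩, -, ⟨C', hC'⟩, -, hne, heq⟩ :=
    exists_ne_map_eq_of_card_lt_of_maps_to (s := A.attach) (by rwa [card_attach])
      (f := fun C : A => f C.1 C.2) fun C _ => hfB C.1 C.2
  exact ⟨C, hC, C', hC', fun h => hne (Subtype.ext h), f C hC, hfB C hC, hf C hC,
    heq ▸ hf C' hC'⟩

lemma merge (h : IsRefinement A B) {C C' D : Finset (Fin n)} (hD : D ∈ B) (hC : C ⊆ D)
    (hC' : C' ⊆ D) : IsRefinement (insert (C ∪ C') ((A.erase C).erase C')) B := by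
  simp only [IsRefinement, mem_insert, mem_erase]
  rintro E (rfl | ⟨-, -, hE⟩)
  exacts [⟨D, hD, union_subset hC hC'⟩, h E hE]

end IsRefinement

lemma IsFinsetPartition.eq_of_isRefinement {A B : Finset (Finset (Fin n))}
    (hA : IsFinsetPartition A) (hB : IsFinsetPartition B) (h : IsRefinement A B)
    (hcard : #A ≤ #B) : A = B := by
  choose f hfB hf using h
  have hsurj : ∀ D ∈ B, ∃ C hC, f C hC = D := by
    intro D hD
    obtain ⟨i, hi⟩ := hB.nonempty D hD
    obtain ⟨C, hC, hiC⟩ := hA.exists_mem i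
    exact ⟨C, hC, hB.eq_of_mem_of_mem (hfB C hC) hD (hf C hC hiC) hi⟩
  have hinj := inj_on_of_surj_on_of_card_le f hfB hsurj hcard
  have hfix : ∀ C hC, f C hC = C := by
    refine fun C hC => (subset_antisymm (hf C hC) fun i hi => ?_).symm
    obtain ⟨C', hC', hiC'⟩ := hA.exists_mem i
    have : f C' hC' = f C hC := hB.eq_of_mem_of_mem (hfB C' hC') (hfB C hC) (hf C' hC' hiC') hi
    exact hinj hC' hC this ▸ hiC'
  refine subset_antisymm (fun C hC => hfix C hC ▸ hfB C hC) fun D hD => ?_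
  obtain ⟨C, hC, rfl⟩ := hsurj D hD
  exact (hfix C hC).symm ▸ hC

section Linkage

variable {d : Fin n → Fin n → ℝ} {S S' : Finset (Fin n)}

lemma cLink_eq_sup (d : Fin n → Fin n → ℝ) (S S' : Finset (Fin n)) :
    cLink d S S' = (S ×ˢ S').sup fun p => ((d p.1 p.2 : ℝ) : EReal) := by
  refine le_antisymm (sSup_le ?_) (Finset.sup_le fun p hp => ?_)
  · rintro _ ⟨i, hi, j, hj, rfl⟩
    exact le_sup (f := fun p : Fin n × Fin n => ((d p.1 p.2 : ℝ) : EReal))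
      (mem_product.2 ⟨hi, hj⟩ : (i, j) ∈ S ×ˢ S')
  · rw [mem_product] at hp
    exact le_sSup ⟨p.1, hp.1, p.2, hp.2, rfl⟩

lemma coe_le_cLink {i j : Fin n} (hi : i ∈ S) (hj : j ∈ S') :
    ((d i j : ℝ) : EReal) ≤ cLink d S S' :=
  le_sSup ⟨i, hi, j, hj, rfl⟩

lemma cLink_lt_coe {r : ℝ} (h : ∀ i ∈ S, ∀ j ∈ S', d i j < r) : cLink d S S' < r := by
  rw [cLink_eq_sup, Finset.sup_lt_iff (EReal.bot_lt_coe r)]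
  rintro ⟨i, j⟩ hij
  rw [mem_product] at hij
  exact EReal.coe_lt_coe_iff.2 (h i hij.1 j hij.2)

end Linkage

variable {d : Fin n → Fin n → ℝ} {G : Fin K₀ → Finset (Fin n)}

lemma IsSeparated.cLink_lt (hsep : IsSeparated d G) {k k₁ k₂ : Fin K₀} {D D' : Finset (Fin n)}
    (hD : D ⊆ G k) (hD' : D' ⊆ G k) (hDD' : Disjoint D D') (hk : k₁ ≠ k₂) {a b : Fin n}
    (ha : a ∈ G k₁) (hb : b ∈ G k₂) : cLink d D D' < d a b :=
  cLink_lt_coe fun i hi j hj => by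
    refine hsep k i (hD hi) j (hD' hj) ?_ k₁ k₂ hk a ha b hb
    rintro rfl
    exact disjoint_left.1 hDD' hi hj

lemma IsSeparated.exists_subset_of_cLink_le (hsep : IsSeparated d G)
    {P : Finset (Finset (Fin n))} (hP : IsFinsetPartition P)
    (hPG : IsRefinement P (univ.image G)) (hcard : K₀ < #P) {C C' : Finset (Fin n)}
    (hC : C ∈ P) (hC' : C' ∈ P)
    (hmin : ∀ D ∈ P, ∀ D' ∈ P, D ≠ D' → cLink d C C' ≤ cLink d D D') :
    ∃ k, C ⊆ G k ∧ C' ⊆ G k := by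
  obtain ⟨_, hk₁, hCk₁⟩ := hPG C hC
  obtain ⟨_, hk₂, hC'k₂⟩ := hPG C' hC'
  obtain ⟨k₁, -, rfl⟩ := mem_image.1 hk₁
  obtain ⟨k₂, -, rfl⟩ := mem_image.1 hk₂
  by_cases hk : k₁ = k₂
  · exact ⟨k₁, hCk₁, hk ▸ hC'k₂⟩
  have hcardG : #(univ.image G) < #P :=
    (card_image_le.trans (by rw [card_univ, Fintype.card_fin])).trans_lt hcard
  obtain ⟨D, hD, D', hD', hne, _, hGk, hDk, hD'k⟩ := hPG.exists_ne_subset_of_card_lt hcardG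
  obtain ⟨k, -, rfl⟩ := mem_image.1 hGk
  obtain ⟨a, ha⟩ := hP.nonempty C hC
  obtain ⟨b, hb⟩ := hP.nonempty C' hC'
  have := hsep.cLink_lt hDk hD'k (hP.pairwiseDisjoint hD hD' hne) hk (hCk₁ ha) (hC'k₂ hb)
  exact absurd ((coe_le_cLink ha hb).trans (hmin D hD D' hD' hne)) this.not_ge

lemma IsMergeStep.of_isSeparated (hsep : IsSeparated d G) {P Q : Finset (Finset (Fin n))}
    (hP : IsFinsetPartition P) (hPG : IsRefinement P (univ.image G)) (hcard : K₀ < #P)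
    (hstep : IsMergeStep d P Q) :
    IsFinsetPartition Q ∧ IsRefinement Q (univ.image G) ∧ #Q = #P - 1 := by
  obtain ⟨C, hC, C', hC', hCC', hmin, rfl⟩ := hstep
  obtain ⟨k, hCk, hC'k⟩ := hsep.exists_subset_of_cLink_le hP hPG hcard hC hC' hmin
  exact ⟨hP.merge hC hC', hPG.merge (mem_image_of_mem G (mem_univ k)) hCk hC'k,
    hP.card_merge hC hC' hCC'⟩

theorem IsHACChain.eq_image_of_isSeparated (hK₀ : 1 ≤ K₀) (hG : IsGroupPartition G)
    (hsep : IsSeparated d G) {Q : ℕ → Finset (Finset (Fin n))} (hQ : IsHACChain d Q) :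
    Q (n - K₀) = univ.image G := by
  have hinv : ∀ r ≤ n - K₀,
      IsFinsetPartition (Q r) ∧ IsRefinement (Q r) (univ.image G) ∧ #(Q r) = n - r := by
    intro r hr
    induction r with
    | zero =>
      rw [hQ.1]
      exact ⟨isFinsetPartition_singletonPartition,
        isRefinement_singletonPartition hG.isFinsetPartition, card_singletonPartition⟩
    | succ r ih =>
      obtain ⟨hP, hPG, hcard⟩ := ih (by omega)
      obtain ⟨hP', hPG', hcard'⟩ :=
        (hQ.2 r (by omega)).of_isSeparated hsep hP hPG (by omega)
      exact ⟨hP', hPG', by omega⟩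
  obtain ⟨hP, hPG, hcard⟩ := hinv (n - K₀) le_rfl
  exact hP.eq_of_isRefinement hG.isFinsetPartition hPG (by rw [hG.card_image]; omega)

end HAC

open MeasureTheory Filter

theorem theorem1a_general {K₀ : ℕ} (hK₀ : 1 ≤ K₀)
    (n : ℕ → ℕ)
    (Ω : ℕ → Type*) [∀ T, MeasurableSpace (Ω T)]
    (μ : ∀ T, Measure (Ω T)) [∀ T, IsProbabilityMeasure (μ T)]
    (dh : ∀ T, Ω T → Fin (n T) → Fin (n T) → ℝ)
    (G : ∀ T, Fin K₀ → Finset (Fin (n T)))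
    (hG : ∀ T, IsGroupPartition (G T))
    (hsep : Tendsto (fun T => μ T {ω | IsSeparated (dh T ω) (G T)})
      atTop (nhds (1 : ENNReal))) :
    Tendsto
      (fun T => μ T {ω | ∀ Q, IsHACChain (dh T ω) Q →
        Q (n T - K₀) = Finset.univ.image (G T)})
      atTop (nhds (1 : ENNReal)) := by
  refine tendsto_of_tendsto_of_tendsto_of_le_of_le hsep tendsto_const_nhds
    (fun T => measure_mono fun ω hω Q hQ => hQ.eq_image_of_isSeparated hK₀ (hG T) hω)
    (fun T => prob_le_one)

/-- **Theorem 1(a).** If, with probability tending to one, the group partition is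
`d̂⁽ᵀ⁾`-separated, then with probability tending to one every run of the complete-linkage
HAC algorithm applied to `d̂⁽ᵀ⁾` yields, at the partition with `K₀` clusters, exactly the
group partition `{G₁⁽ᵀ⁾,…,G_{K₀}⁽ᵀ⁾}`. -/
theorem theorem1a {K₀ : ℕ} (hK₀ : 1 ≤ K₀)
    (n : ℕ → ℕ) (hn : ∀ T, K₀ ≤ n T)
    (Ω : ℕ → Type*) [∀ T, MeasurableSpace (Ω T)]
    (μ : ∀ T, Measure (Ω T)) [∀ T, IsProbabilityMeasure (μ T)]
    (dh : ∀ T, Ω T → Fin (n T) → Fin (n T) → ℝ)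
    (hsym : ∀ T ω i j, dh T ω i j = dh T ω j i)
    (G : ∀ T, Fin K₀ → Finset (Fin (n T)))
    (hG : ∀ T, IsGroupPartition (G T))
    (hsep : Tendsto (fun T => μ T {ω | IsSeparated (dh T ω) (G T)})
      atTop (nhds (1 : ENNReal))) :
    Tendsto
      (fun T => μ T {ω | ∀ Q, IsHACChain (dh T ω) Q →
        Q (n T - K₀) = Finset.univ.image (G T)})
      atTop (nhds (1 : ENNReal)) :=
  theorem1a_general hK₀ n Ω μ dh G hG hsep
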